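/- arXiv:1905.04164 — 5 statements merged into one kernel-verified Lean document; each statement's English description precedes it below -/
import Mathlib

section
/- There is a nonempty open interval of sharpness parameters, namely 1/3 < λ < (1+√3)/3, for which simultaneously (1+λ)/2 > 2/3 and (1 + p(λ))/2 > 2/3, where p(λ) = (1/2)(1 − λ + √((1−λ)(1+3λ))). -/
/-!
The second-round fidelity exceeds 2/3 exactly when p(λ) > 1/3, i.e. when
√((1−λ)(1+3λ)) > λ − 1/3. This is automatic for λ < 1/3; for λ ≥ 1/3 squaring turns it into
9λ² − 6λ − 2 < 0, whose roots are (1 ± √3)/3.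
-/

noncomputable def wernerProb (lam : ℝ) : ℝ :=
  (1 / 2) * (1 - lam + Real.sqrt ((1 - lam) * (1 + 3 * lam)))

lemma sub_one_third_lt_sqrt_of_lt {lam : ℝ} (h : lam < (1 + √3) / 3) :
    lam - 1 / 3 < √((1 - lam) * (1 + 3 * lam)) := by
  rcases lt_or_ge lam (1 / 3) with hlt | hge
  · exact (sub_neg.mpr hlt).trans_le (Real.sqrt_nonneg _)
  · have hsqrt3 : √3 ^ 2 = 3 := Real.sq_sqrt (by norm_num)
    have hsqrt3_pos : 0 < √3 := by positivity
    have hquadratic : 9 * lam ^ 2 - 6 * lam - 2 < 0 := by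
      have hfactor : 9 * lam ^ 2 - 6 * lam - 2
          = 9 * (lam - (1 + √3) / 3) * (lam - (1 - √3) / 3) := by
        ring_nf; rw [hsqrt3]; ring
      rw [hfactor]
      exact mul_neg_of_neg_of_pos (by linarith) (by linarith)
    rw [Real.lt_sqrt (by linarith)]
    nlinarith

lemma one_third_lt_wernerProb {lam : ℝ} (h : lam < (1 + √3) / 3) :
    1 / 3 < wernerProb lam := by
  have := sub_one_third_lt_sqrt_of_lt h
  unfold wernerProb
  linarith

/-- There is a nonempty open interval 1/3 < λ < (1+√3)/3 on which both
the first-round fidelity (1+λ)/2 and the second-round fidelity (1+p(λ))/2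
exceed 2/3. -/
theorem reusability_interval :
    (1 : ℝ) / 3 < (1 + Real.sqrt 3) / 3 ∧
    ∀ lam ∈ Set.Ioo ((1:ℝ)/3) ((1 + Real.sqrt 3)/3),
      (1 + lam) / 2 > 2 / 3 ∧ (1 + wernerProb lam) / 2 > 2 / 3 := by
  have hsqrt3_pos : 0 < √3 := by positivity
  refine ⟨by linarith, ?_⟩
  rintro lam ⟨hlower, hupper⟩
  have := one_third_lt_wernerProb hupper
  constructor <;> linarith
end

section
/- Define the sequence λ₁ = 1/3 and λ_{i+1} = λᵢ / p(λᵢ) where p(λ) = (1/2)(1 − λ + √((1−λ)(1+3λ))). Then λ₁ < λ₂ < ⋯ < λ₆ ≤ 1 < λ₇; i.e., exactly six rounds of weak Bell measurements with fidelity exactly 2/3 at each round are possible starting from a maximally entangled state. -/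
/-!
The round map `f λ = λ / p(λ)` is strictly increasing on `(0, 1)` and, unlike `p`, has a rational
inverse `g μ = μ (1 + μ) / (1 + μ + μ²)`. Writing `c k = g^[k] 1` (so `c 0 = 1`, `c 1 = 2/3`),
`f` maps `(c (k+2), c (k+1))` onto `(c (k+1), c k)`. The rational inequalities
`c 6 < 1/3 < c 5` (numerically `0.323 < 1/3 < 0.353`) therefore put `λ₆` in `(2/3, 1)`, whence
`λ₇ > f (2/3) = 1`. On `(0, 1)` also `p < 1`, so the sequence increases.
-/

open Set

/-- With `D = 1 + μ + μ²` and `λ = prevSharpness μ`, one has `1 - λ = 1 / D` and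
`1 + 3λ = (1 + 2μ)² / D`, so the square root in `wernerProb λ` is rational. -/
noncomputable def prevSharpness (mu : ℝ) : ℝ := mu * (1 + mu) / (1 + mu + mu ^ 2)

noncomputable def sharpnessThreshold (k : ℕ) : ℝ := prevSharpness^[k] 1

theorem wernerProb_pos {lam : ℝ} (h : lam < 1) : 0 < wernerProb lam := by
  unfold wernerProb
  have := Real.sqrt_nonneg ((1 - lam) * (1 + 3 * lam))
  linarith

theorem wernerProb_lt_one {lam : ℝ} (h : 0 < lam) : wernerProb lam < 1 := by
  have hs : Real.sqrt ((1 - lam) * (1 + 3 * lam)) < 1 + lam :=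
    (Real.sqrt_lt' (by linarith)).2 (by nlinarith)
  unfold wernerProb
  linarith

theorem lt_div_wernerProb {lam : ℝ} (h0 : 0 < lam) (h1 : lam < 1) :
    lam < lam / wernerProb lam :=
  (lt_div_iff₀ (wernerProb_pos h1)).2 (mul_lt_of_lt_one_right h0 (wernerProb_lt_one h0))

theorem strictMonoOn_div_wernerProb :
    StrictMonoOn (fun lam => lam / wernerProb lam) (Ioo 0 1) := by
  rintro a ⟨ha0, ha1⟩ b ⟨hb0, hb1⟩ hab
  -- `b² (1 - a)(1 + 3a) - a² (1 - b)(1 + 3b) = (b - a)(a + b + 2ab)`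
  have key : a * √((1 - b) * (1 + 3 * b)) ≤ b * √((1 - a) * (1 + 3 * a)) := by
    have := Real.sqrt_le_sqrt (x := a ^ 2 * ((1 - b) * (1 + 3 * b)))
      (y := b ^ 2 * ((1 - a) * (1 + 3 * a))) (by nlinarith [mul_pos ha0 hb0])
    rwa [Real.sqrt_mul (sq_nonneg _), Real.sqrt_mul (sq_nonneg _), Real.sqrt_sq ha0.le,
      Real.sqrt_sq hb0.le] at this
  simp only
  rw [div_lt_div_iff₀ (wernerProb_pos ha1) (wernerProb_pos hb1), wernerProb, wernerProb]
  nlinarith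

theorem prevSharpness_mem_Ioo {mu : ℝ} (h : 0 < mu) : prevSharpness mu ∈ Ioo 0 1 := by
  unfold prevSharpness
  constructor
  · positivity
  · rw [div_lt_one (by positivity)]
    linarith

theorem prevSharpness_div_wernerProb {mu : ℝ} (h : 0 < mu) :
    prevSharpness mu / wernerProb (prevSharpness mu) = mu := by
  have hsqrt : √((1 - prevSharpness mu) * (1 + 3 * prevSharpness mu)) =
      (1 + 2 * mu) / (1 + mu + mu ^ 2) := by
    rw [← Real.sqrt_sq (by positivity : 0 ≤ (1 + 2 * mu) / (1 + mu + mu ^ 2))]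
    congr 1
    unfold prevSharpness
    field_simp
    ring
  have hp : wernerProb (prevSharpness mu) = (1 + mu) / (1 + mu + mu ^ 2) := by
    rw [wernerProb, hsqrt, prevSharpness]
    field_simp
    ring
  rw [hp, prevSharpness]
  field_simp

theorem div_wernerProb_lt_of_lt_prevSharpness {lam mu : ℝ} (hmu : 0 < mu) (h0 : 0 < lam)
    (h : lam < prevSharpness mu) : lam / wernerProb lam < mu := by
  have hmem := prevSharpness_mem_Ioo hmu
  simpa only [prevSharpness_div_wernerProb hmu] using
    strictMonoOn_div_wernerProb ⟨h0, h.trans hmem.2⟩ hmem h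

theorem lt_div_wernerProb_of_prevSharpness_lt {lam mu : ℝ} (hmu : 0 < mu)
    (h : prevSharpness mu < lam) (h1 : lam < 1) : mu < lam / wernerProb lam := by
  have hmem := prevSharpness_mem_Ioo hmu
  simpa only [prevSharpness_div_wernerProb hmu] using
    strictMonoOn_div_wernerProb hmem ⟨hmem.1.trans h, h1⟩ h

theorem sharpnessThreshold_succ (k : ℕ) :
    sharpnessThreshold (k + 1) = prevSharpness (sharpnessThreshold k) :=
  Function.iterate_succ_apply' _ _ _

theorem sharpnessThreshold_pos (k : ℕ) : 0 < sharpnessThreshold k := by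
  cases k with
  | zero => exact one_pos
  | succ k =>
    exact (sharpnessThreshold_succ k ▸ prevSharpness_mem_Ioo (sharpnessThreshold_pos k)).1

theorem sharpnessThreshold_le_one (k : ℕ) : sharpnessThreshold k ≤ 1 := by
  cases k with
  | zero => exact le_rfl
  | succ k =>
    exact (sharpnessThreshold_succ k ▸ prevSharpness_mem_Ioo (sharpnessThreshold_pos k)).2.le

theorem Ioo_sharpnessThreshold_subset (k : ℕ) :
    Ioo (sharpnessThreshold (k + 1)) (sharpnessThreshold k) ⊆ Ioo 0 1 :=
  Ioo_subset_Ioo (sharpnessThreshold_pos _).le (sharpnessThreshold_le_one _)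

theorem div_wernerProb_mem_Ioo_sharpnessThreshold {lam : ℝ} {k : ℕ}
    (h : lam ∈ Ioo (sharpnessThreshold (k + 2)) (sharpnessThreshold (k + 1))) :
    lam / wernerProb lam ∈ Ioo (sharpnessThreshold (k + 1)) (sharpnessThreshold k) := by
  obtain ⟨hlo, hhi⟩ := h
  have hlam := Ioo_sharpnessThreshold_subset (k + 1) ⟨hlo, hhi⟩
  rw [show sharpnessThreshold (k + 2) = prevSharpness (sharpnessThreshold (k + 1)) from
    sharpnessThreshold_succ _] at hlo
  rw [sharpnessThreshold_succ] at hhi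
  exact ⟨lt_div_wernerProb_of_prevSharpness_lt (sharpnessThreshold_pos _) hlo hlam.2,
    div_wernerProb_lt_of_lt_prevSharpness (sharpnessThreshold_pos _) hlam.1 hhi⟩

theorem one_third_mem_Ioo_sharpnessThreshold :
    (1 / 3 : ℝ) ∈ Ioo (sharpnessThreshold 6) (sharpnessThreshold 5) := by
  norm_num [sharpnessThreshold, prevSharpness]

/-- The recursion λ₁ = 1/3, λ_{i+1} = λᵢ/p(λᵢ) satisfies
λ₁ < λ₂ < ⋯ < λ₆ ≤ 1 < λ₇: exactly six rounds at fidelity 2/3 are possible. -/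
theorem mrn_six (lam : ℕ → ℝ)
    (h1 : lam 1 = 1 / 3)
    (hrec : ∀ i ≥ 1, lam (i + 1) = lam i / wernerProb (lam i)) :
    lam 1 < lam 2 ∧ lam 2 < lam 3 ∧ lam 3 < lam 4 ∧ lam 4 < lam 5 ∧
    lam 5 < lam 6 ∧ lam 6 ≤ 1 ∧ 1 < lam 7 := by
  set c := sharpnessThreshold
  have step (i : ℕ) (hi : 1 ≤ i) (k : ℕ) (h : lam i ∈ Ioo (c (k + 2)) (c (k + 1))) :
      lam (i + 1) ∈ Ioo (c (k + 1)) (c k) :=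
    hrec i hi ▸ div_wernerProb_mem_Ioo_sharpnessThreshold h
  have increasing (i : ℕ) (hi : 1 ≤ i) (k : ℕ) (h : lam i ∈ Ioo (c (k + 1)) (c k)) :
      lam i < lam (i + 1) :=
    hrec i hi ▸ lt_div_wernerProb (Ioo_sharpnessThreshold_subset k h).1
      (Ioo_sharpnessThreshold_subset k h).2
  have l1 : lam 1 ∈ Ioo (c 6) (c 5) := h1 ▸ one_third_mem_Ioo_sharpnessThreshold
  have l2 := step 1 le_rfl 4 l1
  have l3 := step 2 (by norm_num) 3 l2
  have l4 := step 3 (by norm_num) 2 l3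
  have l5 := step 4 (by norm_num) 1 l4
  have l6 := step 5 (by norm_num) 0 l5
  refine ⟨increasing 1 le_rfl 5 l1, increasing 2 (by norm_num) 4 l2,
    increasing 3 (by norm_num) 3 l3, increasing 4 (by norm_num) 2 l4,
    increasing 5 (by norm_num) 1 l5, l6.2.le, ?_⟩
  rw [hrec 6 (by norm_num)]
  exact lt_div_wernerProb_of_prevSharpness_lt one_pos l6.1 l6.2
end

section
/- If the required fidelity in the first round exceeds (4+√3)/6 ≈ 0.9553, then the resource cannot be reused: the sharpness needed satisfies λ = 2f − 1 > (1+√3)/3, and the resulting Werner probability satisfies p(λ) ≤ 1/3, i.e., the effective state is separable. Conversely, if f ≤ (4+√3)/6 then p(2f−1) ≥ 1/3. -/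
/-! The threshold `(1 + √3) / 3` is the larger root of `9λ² - 6λ - 2`, which is where the parabola
`λ ↦ (1 - λ)(1 + 3λ)` under the square root in `wernerProb` meets `(λ - 1/3)²`; and
`wernerProb λ` compares with `1/3` exactly as `√((1 - λ)(1 + 3λ))` compares with `λ - 1/3`. -/

lemma sq_sub_one_third_sub_mul_eq (l : ℝ) :
    (l - 1 / 3) ^ 2 - (1 - l) * (1 + 3 * l) =
      4 * (l - (1 + Real.sqrt 3) / 3) * (l - (1 - Real.sqrt 3) / 3) := by
  have h3 : Real.sqrt 3 ^ 2 = 3 := Real.sq_sqrt (by norm_num)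
  linear_combination (4 / 9 : ℝ) * h3

lemma wernerProb_le_one_third {l : ℝ} (hl : (1 + Real.sqrt 3) / 3 < l) :
    wernerProb l ≤ 1 / 3 := by
  have hpos : 0 < l - (1 - Real.sqrt 3) / 3 := by
    linarith [Real.sqrt_nonneg 3]
  have hsq : (1 - l) * (1 + 3 * l) ≤ (l - 1 / 3) ^ 2 := by
    linarith [sq_sub_one_third_sub_mul_eq l, mul_pos (sub_pos.2 hl) hpos]
  have hroot : Real.sqrt ((1 - l) * (1 + 3 * l)) ≤ l - 1 / 3 :=
    Real.sqrt_le_iff.2 ⟨by linarith [Real.sqrt_nonneg 3], hsq⟩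
  unfold wernerProb
  linarith

lemma one_third_le_wernerProb {l : ℝ} (hl : l ≤ (1 + Real.sqrt 3) / 3) :
    1 / 3 ≤ wernerProb l := by
  have hroot : l - 1 / 3 ≤ Real.sqrt ((1 - l) * (1 + 3 * l)) := by
    rcases le_or_gt l (1 / 3) with hle | hgt
    · linarith [Real.sqrt_nonneg ((1 - l) * (1 + 3 * l))]
    · have hpos : 0 < l - (1 - Real.sqrt 3) / 3 := by
        linarith [Real.sqrt_nonneg 3]
      refine (Real.le_sqrt' (by linarith)).2 ?_
      linarith [sq_sub_one_third_sub_mul_eq l, mul_nonneg (sub_nonneg.2 hl) hpos.le]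
  unfold wernerProb
  linarith

theorem no_reuse_above_threshold_general (f : ℝ) :
    (f > (4 + Real.sqrt 3) / 6 →
      2 * f - 1 > (1 + Real.sqrt 3) / 3 ∧ wernerProb (2 * f - 1) ≤ 1 / 3) ∧
    (f ≤ (4 + Real.sqrt 3) / 6 → wernerProb (2 * f - 1) ≥ 1 / 3) := by
  refine ⟨fun hf => ?_, fun hf => one_third_le_wernerProb (by linarith)⟩
  have hl : 2 * f - 1 > (1 + Real.sqrt 3) / 3 := by linarith
  exact ⟨hl, wernerProb_le_one_third hl⟩

/-- If the first-round fidelity f ∈ (1/2, 1] exceeds (4+√3)/6, then the required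
sharpness λ = 2f−1 exceeds (1+√3)/3 and the effective Werner probability is ≤ 1/3
(separable state): the resource cannot be reused. Conversely, if
f ≤ (4+√3)/6 then p(2f−1) ≥ 1/3. -/
theorem no_reuse_above_threshold (f : ℝ) (hf : f ∈ Set.Ioc ((1:ℝ)/2) 1) :
    (f > (4 + Real.sqrt 3) / 6 →
      2 * f - 1 > (1 + Real.sqrt 3) / 3 ∧ wernerProb (2 * f - 1) ≤ 1 / 3) ∧
    (f ≤ (4 + Real.sqrt 3) / 6 → wernerProb (2 * f - 1) ≥ 1 / 3) :=
  no_reuse_above_threshold_general f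
end

section
/- For all λ ∈ (0,1), the concurrence after white-noise weakening, E₁(λ) = max{0, (3p(λ)−1)/2} with p(λ) = (1/2)(1−λ+√((1−λ)(1+3λ))), is greater than or equal to the concurrence after orthogonal-support weakening, E₂(λ) = 2·max{0, √(λ(1−λ)/2) − λ/4}, with strict inequality on a nonempty subinterval. -/
noncomputable def concWhite (lam : ℝ) : ℝ := max 0 ((3 * wernerProb lam - 1) / 2)

noncomputable def concOrtho (lam : ℝ) : ℝ :=
  2 * max 0 (Real.sqrt (lam * (1 - lam) / 2) - lam / 4)

lemma concWhite_nonneg (lam : ℝ) : 0 ≤ concWhite lam := le_max_left _ _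

lemma three_mul_wernerProb_sub_one_div_two (lam : ℝ) :
    (3 * wernerProb lam - 1) / 2 = (1 - 3 * lam + 3 * Real.sqrt ((1 - lam) * (1 + 3 * lam))) / 4 := by
  unfold wernerProb
  ring

lemma eight_mul_sqrt_le_three_mul_sqrt {lam : ℝ} (hlam : lam ≤ 1) :
    8 * Real.sqrt (lam * (1 - lam) / 2) ≤ 3 * Real.sqrt ((1 - lam) * (1 + 3 * lam)) := by
  have key : 8 ^ 2 * (lam * (1 - lam) / 2) ≤ 3 ^ 2 * ((1 - lam) * (1 + 3 * lam)) := by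
    nlinarith [mul_nonneg (sub_nonneg.2 hlam) (by linarith : (0:ℝ) ≤ 9 - 5 * lam)]
  simpa [Real.sqrt_mul', Real.sqrt_sq] using Real.sqrt_le_sqrt key

lemma concOrtho_lt_concWhite {lam : ℝ} (hlam : lam < 1) (hpos : 0 < concOrtho lam) :
    concOrtho lam < concWhite lam := by
  have hmax : 0 < Real.sqrt (lam * (1 - lam) / 2) - lam / 4 := by
    simpa [concOrtho] using hpos
  calc concOrtho lam = 2 * (Real.sqrt (lam * (1 - lam) / 2) - lam / 4) := by
        rw [concOrtho, max_eq_right hmax.le]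
    _ < (1 - 3 * lam + 3 * Real.sqrt ((1 - lam) * (1 + 3 * lam))) / 4 := by
        linarith [eight_mul_sqrt_le_three_mul_sqrt hlam.le]
    _ = (3 * wernerProb lam - 1) / 2 := (three_mul_wernerProb_sub_one_div_two lam).symm
    _ ≤ concWhite lam := le_max_right _ _

lemma concOrtho_le_concWhite {lam : ℝ} (hlam : lam < 1) : concOrtho lam ≤ concWhite lam := by
  rcases le_or_gt (concOrtho lam) 0 with hle | hpos
  · exact hle.trans (concWhite_nonneg lam)
  · exact (concOrtho_lt_concWhite hlam hpos).le

lemma concOrtho_pos {lam : ℝ} (h0 : 0 < lam) (h1 : lam < 8 / 9) : 0 < concOrtho lam := by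
  have : lam / 4 < Real.sqrt (lam * (1 - lam) / 2) :=
    (Real.lt_sqrt (by positivity)).2 (by nlinarith)
  unfold concOrtho
  rw [max_eq_right (by linarith)]
  linarith

/-- White-noise weakening retains at least as much concurrence as
orthogonal-support weakening, with strict inequality on a nonempty
subinterval of (0,1). -/
theorem white_noise_beats_ortho :
    (∀ lam ∈ Set.Ioo (0:ℝ) 1, concOrtho lam ≤ concWhite lam) ∧
    ∃ a b : ℝ, a < b ∧ Set.Ioo a b ⊆ Set.Ioo (0:ℝ) 1 ∧
      ∀ lam ∈ Set.Ioo a b, concOrtho lam < concWhite lam :=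
  ⟨fun _ hlam => concOrtho_le_concWhite hlam.2,
    0, 8 / 9, by norm_num, Set.Ioo_subset_Ioo_right (by norm_num),
    fun _ hlam => concOrtho_lt_concWhite (by linarith [hlam.2]) (concOrtho_pos hlam.1 hlam.2)⟩
end

section
/- For white-noise weakening of Bell measurements with a maximally entangled resource, the set of sharpness parameters yielding nonclassical first-round fidelity and an entangled second-round effective state is the interval (1/3, (1+√3)/3), which strictly contains in length the corresponding interval (1/2, 8/9) for the orthogonal-Schmidt-support weakening scheme; moreover (1+√3)/3 > 8/9. -/
/-!
Both conditions reduce to quadratic inequalities in `λ`. Once the fidelity condition forces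
`λ > 1/3` (resp. `λ > 1/2`), both sides of the entanglement condition
`λ - 1/3 < √((1-λ)(1+3λ))` (resp. `λ/4 < √(λ(1-λ)/2)`) are nonnegative, so it may be squared;
this gives `9λ² - 6λ - 2 < 0`, with roots `(1 ± √3)/3` (resp. `λ(9λ - 8) < 0`). The comparisons
of the endpoints follow from `5/3 < √3`.
-/

lemma five_thirds_lt_sqrt_three : (5 : ℝ) / 3 < √3 :=
  (Real.lt_sqrt (by norm_num)).2 (by norm_num)

lemma one_third_lt_wernerProb_iff {lam : ℝ} (hlam : 1 / 3 ≤ lam) :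
    1 / 3 < wernerProb lam ↔ lam < (1 + √3) / 3 := by
  have hroots : (1 - √3) / 3 ≤ (1 + √3) / 3 := by linarith [five_thirds_lt_sqrt_three]
  have hfactor : (lam - 1 / 3) ^ 2 - (1 - lam) * (1 + 3 * lam) =
      4 * ((lam - (1 - √3) / 3) * (lam - (1 + √3) / 3)) := by
    linear_combination (4 / 9) * Real.sq_sqrt (show (0 : ℝ) ≤ 3 by norm_num)
  calc 1 / 3 < wernerProb lam ↔ lam - 1 / 3 < √((1 - lam) * (1 + 3 * lam)) := by
        unfold wernerProb; constructor <;> intro h <;> linarith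
    _ ↔ (lam - 1 / 3) ^ 2 < (1 - lam) * (1 + 3 * lam) := Real.lt_sqrt (by linarith)
    _ ↔ (lam - (1 - √3) / 3) * (lam - (1 + √3) / 3) < 0 := by
        constructor <;> intro h <;> linarith
    _ ↔ lam < (1 + √3) / 3 := by
        rw [sub_mul_sub_neg_iff lam hroots, and_iff_right (by linarith [five_thirds_lt_sqrt_three])]

lemma zero_lt_concurrence_iff {lam : ℝ} (hlam : 0 < lam) :
    0 < 2 * max 0 (√(lam * (1 - lam) / 2) - lam / 4) ↔ lam < 8 / 9 := by
  have hfactor : (lam / 4) ^ 2 - lam * (1 - lam) / 2 = 9 / 16 * ((lam - 0) * (lam - 8 / 9)) := by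
    ring
  calc 0 < 2 * max 0 (√(lam * (1 - lam) / 2) - lam / 4)
        ↔ lam / 4 < √(lam * (1 - lam) / 2) := by
        rw [mul_pos_iff_of_pos_left two_pos, lt_max_iff, sub_pos, lt_self_iff_false, false_or]
    _ ↔ (lam / 4) ^ 2 < lam * (1 - lam) / 2 := Real.lt_sqrt (by positivity)
    _ ↔ (lam - 0) * (lam - 8 / 9) < 0 := by constructor <;> intro h <;> linarith
    _ ↔ lam < 8 / 9 := by
        rw [sub_mul_sub_neg_iff lam (by norm_num), and_iff_right hlam]

/-- For white-noise weakening, nonclassical first-round fidelity together with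
an entangled second-round effective state holds exactly on (1/3, (1+√3)/3);
for orthogonal-support weakening, exactly on (1/2, 8/9). The former interval
is longer, and (1+√3)/3 > 8/9. -/
theorem white_noise_interval_better :
    (∀ lam ∈ Set.Ioc (0:ℝ) 1,
      ((1 + lam) / 2 > 2 / 3 ∧ wernerProb lam > 1 / 3) ↔
        lam ∈ Set.Ioo ((1:ℝ)/3) ((1 + Real.sqrt 3)/3)) ∧
    (∀ lam ∈ Set.Ioc (0:ℝ) 1,
      ((1 + 2 * lam) / 3 > 2 / 3 ∧
          0 < 2 * max 0 (Real.sqrt (lam * (1 - lam) / 2) - lam / 4)) ↔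
        lam ∈ Set.Ioo ((1:ℝ)/2) (8/9)) ∧
    (8:ℝ)/9 - 1/2 < (1 + Real.sqrt 3)/3 - 1/3 ∧
    (8:ℝ)/9 < (1 + Real.sqrt 3)/3 := by
  refine ⟨fun lam _ => ?_, fun lam _ => ?_, by linarith [five_thirds_lt_sqrt_three],
    by linarith [five_thirds_lt_sqrt_three]⟩
  · have hfidelity : (1 + lam) / 2 > 2 / 3 ↔ 1 / 3 < lam := by
      constructor <;> intro h <;> linarith
    rw [hfidelity, Set.mem_Ioo]
    exact and_congr_right fun h => one_third_lt_wernerProb_iff h.le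
  · have hfidelity : (1 + 2 * lam) / 3 > 2 / 3 ↔ 1 / 2 < lam := by
      constructor <;> intro h <;> linarith
    rw [hfidelity, Set.mem_Ioo]
    exact and_congr_right fun h => zero_lt_concurrence_iff (by linarith)
end
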